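/- arXiv:math/0312288 — 9 statements merged into one kernel-verified Lean document; each statement's English description precedes it below -/
import Mathlib

section
/- Let P : ℕ → ℕ be a sequence of prime numbers, and let Σ_P denote the P-adic solenoid, i.e., the subgroup of the infinite product (S¹)^ℕ (coordinates indexed by ℕ) consisting of sequences z with z n = (z (n+1))^(P n) for all n, where S¹ is the unit circle in ℂ. For k a positive integer, let h_P^k : Σ_P → Σ_P be the map raising every coordinate to the k-th power. Then h_P^k is a well-defined surjective continuous group homomorphism. -/
/-- The `P`-adic solenoid: sequences on the unit circle with `z n = z (n+1) ^ P n`. -/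
def Solenoid (P : ℕ → ℕ) : Set (ℕ → ℂ) :=
  {z | (∀ n, ‖z n‖ = 1) ∧ ∀ n, z n = z (n + 1) ^ P n}

/-- The coordinatewise `k`-th power map. -/
def hpow (k : ℕ) (z : ℕ → ℂ) : ℕ → ℂ := fun n => z n ^ k

/-!
Only surjectivity needs an argument. Given `y` in the solenoid, the sets
`C N = {z ∈ Σ_P | z N ^ k = y N}` are closed in the compact group `Σ_P` and decrease in `N`,
since `z N ^ k = (z (N+1) ^ k) ^ P N`. Each is nonempty: a `k`-th root `u` of `y N` on the circle
lifts to a point of `Σ_P` with `N`-th coordinate `u`, by choosing successive roots upwards and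
taking powers downwards. Cantor's intersection theorem gives `z` in every `C N`, i.e. `z ^ k = y`.
A greedy choice of compatible roots would not do: the root at level `n + 1` is constrained both
by `y (n + 1)` and by the root already chosen at level `n`.
-/

lemma exists_pow_eq_of_norm_eq_one {w : ℂ} (hw : ‖w‖ = 1) {m : ℕ} (hm : m ≠ 0) :
    ∃ u : ℂ, ‖u‖ = 1 ∧ u ^ m = w := by
  obtain ⟨u, hu⟩ := IsAlgClosed.exists_pow_nat_eq w (Nat.pos_of_ne_zero hm)
  refine ⟨u, (pow_eq_one_iff_of_nonneg (norm_nonneg u) hm).mp ?_, hu⟩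
  rw [← norm_pow, hu, hw]

section Solenoid

variable {P : ℕ → ℕ}

lemma isClosed_solenoid (P : ℕ → ℕ) : IsClosed (Solenoid P) := by
  simp only [Solenoid, Set.ofPred_and, Set.ofPred_forall]
  exact (isClosed_iInter fun n => isClosed_eq (by fun_prop) continuous_const).inter
    (isClosed_iInter fun n => isClosed_eq (continuous_apply n) (by fun_prop))

lemma isCompact_solenoid (P : ℕ → ℕ) : IsCompact (Solenoid P) :=
  (isCompact_univ_pi fun _ => isCompact_sphere (0 : ℂ) 1).of_isClosed_subset
    (isClosed_solenoid P) fun _ hz n _ => mem_sphere_zero_iff_norm.mpr (hz.1 n)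

lemma exists_mem_solenoid_apply_zero_eq (hP : ∀ n, P n ≠ 0) {u : ℂ} (hu : ‖u‖ = 1) :
    ∃ z ∈ Solenoid P, z 0 = u := by
  choose root norm_root root_pow using fun (n : ℕ) (w : {w : ℂ // ‖w‖ = 1}) =>
    exists_pow_eq_of_norm_eq_one w.2 (hP n)
  let z : ℕ → {w : ℂ // ‖w‖ = 1} :=
    fun n => Nat.rec ⟨u, hu⟩ (fun n w => ⟨root n w, norm_root n w⟩) n
  exact ⟨fun n => (z n).1, ⟨fun n => (z n).2, fun n => (root_pow n (z n)).symm⟩, rfl⟩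

lemma exists_mem_solenoid_apply_eq (hP : ∀ n, P n ≠ 0) (N : ℕ) {u : ℂ} (hu : ‖u‖ = 1) :
    ∃ z ∈ Solenoid P, z N = u := by
  induction N generalizing P with
  | zero => exact exists_mem_solenoid_apply_zero_eq hP hu
  | succ N ih =>
    obtain ⟨z, ⟨hz_norm, hz_rel⟩, hzN⟩ := ih (P := fun n => P (n + 1)) (fun n => hP (n + 1))
    refine ⟨fun n => Nat.casesOn n (z 0 ^ P 0) z, ⟨?_, ?_⟩, hzN⟩
    · rintro (_ | n)
      · simp [hz_norm 0]
      · exact hz_norm n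
    · rintro (_ | n)
      · rfl
      · exact hz_rel n

lemma hpow_mem_solenoid (k : ℕ) {z : ℕ → ℂ} (hz : z ∈ Solenoid P) : hpow k z ∈ Solenoid P := by
  refine ⟨fun n => by simp [hpow, hz.1 n], fun n => ?_⟩
  simp only [hpow]
  rw [hz.2 n, ← pow_mul, ← pow_mul, mul_comm]

lemma hpow_mul (k : ℕ) (z w : ℕ → ℂ) : hpow k (z * w) = hpow k z * hpow k w :=
  funext fun n => mul_pow (z n) (w n) k

lemma continuous_hpow (k : ℕ) : Continuous (hpow k) :=
  continuous_pi fun n => (continuous_apply n).pow k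

lemma exists_mem_solenoid_hpow_eq (hP : ∀ n, P n ≠ 0) {k : ℕ} (hk : k ≠ 0) {y : ℕ → ℂ}
    (hy : y ∈ Solenoid P) : ∃ z ∈ Solenoid P, hpow k z = y := by
  let C : ℕ → Set (ℕ → ℂ) := fun N => Solenoid P ∩ {z | z N ^ k = y N}
  have hC_closed (N : ℕ) : IsClosed (C N) :=
    (isClosed_solenoid P).inter (isClosed_eq (by fun_prop) continuous_const)
  have hC_succ (N : ℕ) : C (N + 1) ⊆ C N := by
    rintro z ⟨hz, hzk⟩
    refine ⟨hz, ?_⟩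
    change z N ^ k = y N
    rw [hz.2 N, hy.2 N, ← hzk, ← pow_mul, ← pow_mul, mul_comm]
  have hC_nonempty (N : ℕ) : (C N).Nonempty := by
    obtain ⟨u, hu, huk⟩ := exists_pow_eq_of_norm_eq_one (hy.1 N) hk
    obtain ⟨z, hz, hzN⟩ := exists_mem_solenoid_apply_eq hP N hu
    exact ⟨z, hz, by rw [Set.mem_ofPred_eq, hzN, huk]⟩
  obtain ⟨z, hz⟩ := IsCompact.nonempty_iInter_of_sequence_nonempty_isCompact_isClosed C
    hC_succ hC_nonempty ((isCompact_solenoid P).of_isClosed_subset (hC_closed 0) Set.inter_subset_left)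
    hC_closed
  rw [Set.mem_iInter] at hz
  exact ⟨z, (hz 0).1, funext fun N => (hz N).2⟩

end Solenoid

/-- The coordinatewise `k`-th power map on the `P`-adic solenoid is a well-defined
surjective continuous group homomorphism. -/
theorem stmt_2 (P : ℕ → ℕ) (hP : ∀ n, (P n).Prime) (k : ℕ) (hk : 0 < k) :
    (∀ z ∈ Solenoid P, hpow k z ∈ Solenoid P) ∧
    (∀ z w : ℕ → ℂ, hpow k (z * w) = hpow k z * hpow k w) ∧
    Continuous (fun z : Solenoid P => hpow k (z : ℕ → ℂ)) ∧
    (∀ y ∈ Solenoid P, ∃ z ∈ Solenoid P, hpow k z = y) :=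
  ⟨fun _ => hpow_mem_solenoid k, hpow_mul k, (continuous_hpow k).comp continuous_subtype_val,
    fun _ => exists_mem_solenoid_hpow_eq (fun n => (hP n).ne_zero) hk.ne'⟩
end

section
/- Let P : ℕ → ℕ be a sequence of primes and Σ_P the P-adic solenoid. For every positive integer k, the fiber (h_P^k)⁻¹(e) over the identity e = (1,1,…) has cardinality at most k. -/
/-!
Any two distinct points of an inverse limit are already told apart at some finite stage, and
then at every later stage. Hence a finite set of points embeds into a single stage, so an inverse
limit of sets with at most `k` elements has at most `k` elements. The fiber of `h_P^k` over `e`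
is such an inverse limit: all its coordinates are `k`-th roots of unity.
-/

open Cardinal

universe u

section InverseLimit

variable {ι : Type*} [Preorder ι] [IsDirectedOrder ι] [Nonempty ι] {X : Type u}
  {Y : ι → Type u} (π : ∀ i, X → Y i)

theorem Finset.exists_injOn_of_separating_of_refining
    (hsep : ∀ x y, (∀ i, π i x = π i y) → x = y)
    (hrefine : ∀ i j, i ≤ j → ∀ x y, π j x = π j y → π i x = π i y) (s : Finset X) :
    ∃ i, Set.InjOn (π i) s := by
  classical
  have hstage : ∀ p : X × X, ∃ i, p.1 ≠ p.2 → π i p.1 ≠ π i p.2 := by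
    intro p
    by_contra! h
    exact (h (Classical.arbitrary ι)).1 (hsep _ _ fun i => (h i).2)
  choose stage hstage using hstage
  obtain ⟨M, hM⟩ := ((s ×ˢ s).image stage).exists_le
  refine ⟨M, fun x hx y hy hxy => by_contra fun hne => hstage (x, y) hne ?_⟩
  exact hrefine _ _ (hM _ (Finset.mem_image_of_mem _ (Finset.mk_mem_product hx hy))) x y hxy

theorem Cardinal.mk_le_of_separating_of_refining
    (hsep : ∀ x y, (∀ i, π i x = π i y) → x = y)
    (hrefine : ∀ i j, i ≤ j → ∀ x y, π j x = π j y → π i x = π i y)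
    (k : ℕ) (hY : ∀ i, #(Y i) ≤ k) : #X ≤ k := by
  refine card_le_of fun s => ?_
  obtain ⟨i, hi⟩ := Finset.exists_injOn_of_separating_of_refining π hsep hrefine s
  have : (s.card : Cardinal) ≤ k :=
    calc (s.card : Cardinal) = #s := (mk_coe_finset (s := s)).symm
      _ ≤ #(Y i) := mk_le_of_injective hi.injective
      _ ≤ k := hY i
  exact_mod_cast this

end InverseLimit

theorem Solenoid.eq_of_eq_of_le {P : ℕ → ℕ} {z w : ℕ → ℂ} (hz : z ∈ Solenoid P)
    (hw : w ∈ Solenoid P) {n m : ℕ} (hnm : n ≤ m) (h : z m = w m) : z n = w n := by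
  induction m, hnm using Nat.le_induction with
  | base => exact h
  | succ m _ ih => exact ih (by rw [hz.2 m, hw.2 m, h])

theorem Polynomial.mk_nthRootsFinset_le {R : Type*} [CommRing R] [IsDomain R] (k : ℕ) (a : R) :
    #(nthRootsFinset k a) ≤ k := by
  classical
  rw [mk_coe_finset]
  have : (nthRootsFinset k a).card ≤ k := by
    rw [nthRootsFinset_def]
    exact (Multiset.toFinset_card_le _).trans (card_nthRoots k a)
  exact_mod_cast this

theorem stmt_3_general (P : ℕ → ℕ) (k : ℕ) (hk : 0 < k) :
    Cardinal.mk {z : ℕ → ℂ // z ∈ Solenoid P ∧ hpow k z = 1} ≤ (k : Cardinal) := by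
  let coord (n : ℕ) (z : {z : ℕ → ℂ // z ∈ Solenoid P ∧ hpow k z = 1}) :
      Polynomial.nthRootsFinset k (1 : ℂ) :=
    ⟨z.1 n, (Polynomial.mem_nthRootsFinset hk 1).2 (congrFun z.2.2 n)⟩
  refine mk_le_of_separating_of_refining coord ?_ ?_ k fun _ =>
    Polynomial.mk_nthRootsFinset_le k 1
  · exact fun z w h => Subtype.ext (funext fun n => congrArg Subtype.val (h n))
  · exact fun n m hnm z w h =>
      Subtype.ext (Solenoid.eq_of_eq_of_le z.2.1 w.2.1 hnm (congrArg Subtype.val h))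

/-- The fiber of the coordinatewise `k`-th power map over the identity
has cardinality at most `k`. -/
theorem stmt_3 (P : ℕ → ℕ) (hP : ∀ n, (P n).Prime) (k : ℕ) (hk : 0 < k) :
    Cardinal.mk {z : ℕ → ℂ // z ∈ Solenoid P ∧ hpow k z = 1} ≤ (k : Cardinal) :=
  stmt_3_general P k hk
end

section
/- Let P : ℕ → ℕ be a sequence of primes and let k be a prime that occurs infinitely often in P (i.e., {n : P n = k} is infinite). Then the kernel of the coordinatewise k-th power map h_P^k : Σ_P → Σ_P is trivial: if z ∈ Σ_P satisfies (z n)^k = 1 for all n, then z n = 1 for all n. -/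
/-!
Each coordinate `z n` is a power of every later coordinate `z m`. Choosing `m > n` with
`P m = k` gives `z m = z (m + 1) ^ k = 1`, hence `z n = 1`.
-/

section PowerTower

variable {M : Type*} [Monoid M] {P : ℕ → ℕ} {z : ℕ → M}

theorem eq_pow_prod_range_of_eq_pow_succ (hz : ∀ n, z n = z (n + 1) ^ P n) (n j : ℕ) :
    z n = z (n + j) ^ ∏ i ∈ Finset.range j, P (n + i) := by
  induction j with
  | zero => simp
  | succ j ih =>
    rw [ih, hz (n + j), Finset.prod_range_succ, ← pow_mul, mul_comm, ← Nat.add_assoc]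

theorem eq_one_of_le_of_eq_pow_succ (hz : ∀ n, z n = z (n + 1) ^ P n) {m n : ℕ}
    (hnm : n ≤ m) (hm : z m = 1) : z n = 1 := by
  obtain ⟨j, rfl⟩ := Nat.exists_eq_add_of_le hnm
  rw [eq_pow_prod_range_of_eq_pow_succ hz n j, hm, one_pow]

end PowerTower

theorem stmt_4_general (P : ℕ → ℕ) (k : ℕ)
    (hinf : {n | P n = k}.Infinite) :
    ∀ z ∈ Solenoid P, (∀ n, z n ^ k = 1) → ∀ n, z n = 1 := by
  rintro z ⟨-, hz⟩ hker n
  obtain ⟨m, hPm, hnm⟩ := hinf.exists_gt n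
  refine eq_one_of_le_of_eq_pow_succ hz hnm.le ?_
  rw [hz m, hPm, hker (m + 1)]

/-- If the prime `k` occurs infinitely often in `P`, the kernel of the
coordinatewise `k`-th power map on the solenoid is trivial. -/
theorem stmt_4 (P : ℕ → ℕ) (hP : ∀ n, (P n).Prime) (k : ℕ) (hk : k.Prime)
    (hinf : {n | P n = k}.Infinite) :
    ∀ z ∈ Solenoid P, (∀ n, z n ^ k = 1) → ∀ n, z n = 1 :=
  stmt_4_general P k hinf
end

section
/- Let P be a sequence of primes, k a positive integer all of whose prime divisors occur infinitely often in P. Then the coordinatewise k-th power map h_P^k on the solenoid Σ_P is injective. -/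
/-!
If `z, w ∈ Σ_P` have the same `k`-th powers, then `u = z / w` is again a compatible sequence
of `k`-th roots of unity. Write `k = p * a` with `p` prime. The sequence `u ^ p` is compatible
and killed by `a`, so by induction `u ^ p = 1`. Since `P m = p` for some `m ≥ i`, `u i` is a
power of `u (m + 1) ^ p = 1`.
-/

namespace Solenoid

variable {M : Type*} [Monoid M] {P : ℕ → ℕ} {u : ℕ → M}

lemma eq_pow_prod_Ico (hu : ∀ i, u i = u (i + 1) ^ P i) {n m : ℕ} (hnm : n ≤ m) :
    u n = u m ^ ∏ i ∈ Finset.Ico n m, P i := by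
  induction m, hnm using Nat.le_induction with
  | base => simp
  | succ m hm ih => rw [Finset.prod_Ico_succ_top hm, pow_mul', ← hu m, ih]

lemma pow_eq_pow_succ_pow (hu : ∀ i, u i = u (i + 1) ^ P i) (a : ℕ) :
    ∀ i, u i ^ a = (u (i + 1) ^ a) ^ P i := fun i => by
  rw [hu i, pow_right_comm]

lemma eq_one_of_pow_eq_one_of_infinite (hu : ∀ i, u i = u (i + 1) ^ P i) {p : ℕ}
    (hp : {n | P n = p}.Infinite) (hroot : ∀ i, u i ^ p = 1) (i : ℕ) : u i = 1 := by
  obtain ⟨m, hm, him⟩ := hp.exists_gt i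
  have hmem : m ∈ Finset.Ico i (m + 1) := Finset.mem_Ico.2 ⟨him.le, m.lt_succ_self⟩
  obtain ⟨c, hc⟩ : p ∣ ∏ j ∈ Finset.Ico i (m + 1), P j := hm ▸ Finset.dvd_prod_of_mem P hmem
  rw [eq_pow_prod_Ico hu (by omega : i ≤ m + 1), hc, pow_mul, hroot, one_pow]

lemma eq_one_of_pow_eq_one (hu : ∀ i, u i = u (i + 1) ^ P i) {k : ℕ} (hk : 0 < k)
    (hdiv : ∀ p : ℕ, p.Prime → p ∣ k → {n | P n = p}.Infinite) (hroot : ∀ i, u i ^ k = 1) :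
    ∀ i, u i = 1 := by
  induction k using induction_on_primes generalizing u with
  | zero => exact absurd hk (lt_irrefl 0)
  | one => simpa using hroot
  | prime_mul p a hp ih =>
    have hu_pow_one : ∀ i, u i ^ p = 1 :=
      ih (pow_eq_pow_succ_pow hu p) (Nat.pos_of_mul_pos_left hk)
        (fun q hq hqa => hdiv q hq (dvd_mul_of_dvd_right hqa p))
        (fun i => by rw [← pow_mul, hroot])
    exact eq_one_of_pow_eq_one_of_infinite hu (hdiv p hp (dvd_mul_right p a)) hu_pow_one

end Solenoid

theorem stmt_6_general (P : ℕ → ℕ) (k : ℕ) (hk : 0 < k)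
    (hdiv : ∀ p : ℕ, p.Prime → p ∣ k → {n | P n = p}.Infinite) :
    Set.InjOn (hpow k) (Solenoid P) := by
  intro z hz w hw h
  have hw0 : ∀ i, w i ≠ 0 := fun i hi => by simpa [hi] using hw.1 i
  have hu : ∀ i, z i / w i = (z (i + 1) / w (i + 1)) ^ P i := fun i => by
    rw [div_pow, ← hz.2 i, ← hw.2 i]
  have hroot : ∀ i, (z i / w i) ^ k = 1 := fun i => by
    rw [div_pow, show z i ^ k = w i ^ k from congrFun h i, div_self (pow_ne_zero k (hw0 i))]
  funext i
  exact (div_eq_one_iff_eq (hw0 i)).1 (Solenoid.eq_one_of_pow_eq_one hu hk hdiv hroot i)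

/-- If every prime divisor of `k` occurs infinitely often in `P`, then the
coordinatewise `k`-th power map is injective on the solenoid. -/
theorem stmt_6 (P : ℕ → ℕ) (hP : ∀ n, (P n).Prime) (k : ℕ) (hk : 0 < k)
    (hdiv : ∀ p : ℕ, p.Prime → p ∣ k → {n | P n = p}.Infinite) :
    Set.InjOn (hpow k) (Solenoid P) :=
  stmt_6_general P k hk hdiv
end

section
/- Let P : ℕ → ℕ be a sequence of primes and k a prime such that k ≠ P n for all n. Then the kernel of h_P^k : Σ_P → Σ_P has exactly k elements. -/
/-!
The `k`-torsion of the solenoid is the inverse limit of the system `μ_k ← μ_k ← ⋯` whose bonding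
maps are `x ↦ x ^ P n`. Since `P n` is prime to `k`, each bonding map is a bijection of `μ_k`
(inverted by raising to the power `(P n)⁻¹ mod k`), so the limit is identified with `μ_k` by
reading off the coordinate `0`, and `μ_k ⊆ ℂ` has `k` elements.
-/

section CompatibleSeq

variable {α : Type*} (e : ℕ → α ≃ α)

def seqOfHead (a : α) : ℕ → α
  | 0 => a
  | n + 1 => (e n).symm (seqOfHead a n)

def compatibleSeqEquiv : {z : ℕ → α // ∀ n, z n = e n (z (n + 1))} ≃ α where
  toFun z := z.1 0
  invFun a := ⟨seqOfHead e a, fun n => by simp [seqOfHead]⟩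
  left_inv := by
    rintro ⟨z, hz⟩
    ext n
    induction n with
    | zero => rfl
    | succ n ih =>
      change seqOfHead e (z 0) n = z n at ih
      change (e n).symm (seqOfHead e (z 0) n) = z (n + 1)
      rw [ih, hz n, Equiv.symm_apply_apply]
  right_inv _ := rfl

end CompatibleSeq

theorem pow_eq_self_of_modEq_one {M : Type*} [Monoid M] {x : M} {k m : ℕ} (hx : x ^ k = 1)
    (hm : m ≡ 1 [MOD k]) : x ^ m = x := by
  rw [pow_eq_pow_mod m hx, hm, ← pow_eq_pow_mod 1 hx, pow_one]

theorem Nat.Coprime.mul_val_inv_modEq_one {p k : ℕ} [NeZero k] (h : p.Coprime k) :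
    p * ((p : ZMod k)⁻¹).val ≡ 1 [MOD k] := by
  rw [← ZMod.natCast_eq_natCast_iff, Nat.cast_mul, ZMod.natCast_zmod_val, Nat.cast_one,
    ZMod.coe_mul_inv_eq_one p h]

def powEquivOfCoprime (M : Type*) [Monoid M] {p k : ℕ} [NeZero k] (h : p.Coprime k) :
    {x : M // x ^ k = 1} ≃ {x : M // x ^ k = 1} where
  toFun x := ⟨x.1 ^ p, by rw [pow_right_comm, x.2, one_pow]⟩
  invFun x := ⟨x.1 ^ ((p : ZMod k)⁻¹).val, by rw [pow_right_comm, x.2, one_pow]⟩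
  left_inv x := Subtype.ext <| by
    change (x.1 ^ p) ^ _ = x.1
    rw [← pow_mul, pow_eq_self_of_modEq_one x.2 h.mul_val_inv_modEq_one]
  right_inv x := Subtype.ext <| by
    change (x.1 ^ _) ^ p = x.1
    rw [← pow_mul, mul_comm, pow_eq_self_of_modEq_one x.2 h.mul_val_inv_modEq_one]

theorem Complex.natCard_pow_eq_one {k : ℕ} (hk : 0 < k) : Nat.card {x : ℂ // x ^ k = 1} = k := by
  have e : {x : ℂ // x ^ k = 1} ≃ Polynomial.nthRootsFinset k (1 : ℂ) :=
    Equiv.subtypeEquivRight fun _ => (Polynomial.mem_nthRootsFinset hk 1).symm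
  rw [Nat.card_congr e, Nat.card_eq_finsetCard,
    (Complex.isPrimitiveRoot_exp k hk.ne').card_nthRootsFinset]

def solenoidPowKerEquiv (P : ℕ → ℕ) {k : ℕ} [NeZero k] (hP : ∀ n, (P n).Coprime k) :
    {z : ℕ → ℂ // z ∈ Solenoid P ∧ ∀ n, z n ^ k = 1} ≃
      {w : ℕ → {x : ℂ // x ^ k = 1} // ∀ n, w n = powEquivOfCoprime ℂ (hP n) (w (n + 1))} where
  toFun z := ⟨fun n => ⟨z.1 n, z.2.2 n⟩, fun n => Subtype.ext (z.2.1.2 n)⟩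
  invFun w := ⟨fun n => (w.1 n).1,
    ⟨fun n => Complex.norm_eq_one_of_pow_eq_one (w.1 n).2 (NeZero.ne k),
      fun n => congrArg Subtype.val (w.2 n)⟩, fun n => (w.1 n).2⟩
  left_inv _ := rfl
  right_inv _ := rfl

/-- If the prime `k` never occurs in `P`, the kernel of the coordinatewise
`k`-th power map has exactly `k` elements. -/
theorem stmt_8 (P : ℕ → ℕ) (hP : ∀ n, (P n).Prime) (k : ℕ) (hk : k.Prime)
    (hne : ∀ n, P n ≠ k) :
    Nat.card {z : ℕ → ℂ // z ∈ Solenoid P ∧ ∀ n, z n ^ k = 1} = k := by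
  have : NeZero k := ⟨hk.ne_zero⟩
  have hcop : ∀ n, (P n).Coprime k := fun n => (Nat.coprime_primes (hP n) hk).mpr (hne n)
  rw [Nat.card_congr ((solenoidPowKerEquiv P hcop).trans (compatibleSeqEquiv _)),
    Complex.natCard_pow_eq_one hk.pos]
end

section
/- Let P : ℕ → ℕ be a sequence of primes such that gcd(k, P n) = 1 for all n, where k is a positive integer. Then for every k-th root of unity ξ in ℂ there exists a point z ∈ Σ_P with z 0 = ξ and (z n)^k = 1 for all n. Consequently the kernel of h_P^k has at least k elements. -/
open Polynomial

theorem exists_pow_eq_of_pow_eq_one_of_coprime {M : Type*} [Monoid M] {ξ : M} {k p : ℕ}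
    (hξ : ξ ^ k = 1) (hkp : k.Coprime p) : ∃ η : M, η ^ k = 1 ∧ η ^ p = ξ := by
  have hp : p.Coprime (orderOf ξ) := hkp.symm.coprime_dvd_right (orderOf_dvd_of_pow_eq_one hξ)
  obtain ⟨m, hm⟩ := exists_pow_eq_self_of_coprime hp
  refine ⟨ξ ^ m, ?_, ?_⟩
  · rw [← pow_mul, mul_comm, pow_mul, hξ, one_pow]
  · rw [← pow_mul, mul_comm, pow_mul, hm]

theorem exists_seq_mem_of_surjOn {α : Type*} {S : Set α} (f : ℕ → α → α)
    (hf : ∀ n, Set.SurjOn (f n) S S) {a : α} (ha : a ∈ S) :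
    ∃ z : ℕ → α, z 0 = a ∧ (∀ n, z n ∈ S) ∧ ∀ n, z n = f n (z (n + 1)) := by
  choose g hgS hg using fun n a (ha : a ∈ S) => hf n ha
  let w : ℕ → S := fun n => Nat.rec ⟨a, ha⟩ (fun m x => ⟨g m x x.2, hgS m x x.2⟩) n
  exact ⟨fun n => (w n).1, rfl, fun n => (w n).2, fun n => (hg n (w n).1 (w n).2).symm⟩

theorem Complex.cardinalMk_pow_eq_one {k : ℕ} (hk : 0 < k) :
    Cardinal.mk {ξ : ℂ // ξ ^ k = 1} = k := by
  have hset : {ξ : ℂ | ξ ^ k = 1} = (nthRootsFinset k (1 : ℂ) : Set ℂ) := by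
    ext ξ
    simp [mem_nthRootsFinset hk]
  rw [← Set.coe_ofPred, hset]
  exact Cardinal.mk_coe_finset.trans
    (congrArg _ (Complex.isPrimitiveRoot_exp k hk.ne').card_nthRootsFinset)

theorem exists_mem_solenoid_pow_eq_one {P : ℕ → ℕ} {k : ℕ} (hk : 0 < k)
    (hco : ∀ n, Nat.gcd k (P n) = 1) {ξ : ℂ} (hξ : ξ ^ k = 1) :
    ∃ z ∈ Solenoid P, z 0 = ξ ∧ ∀ n, z n ^ k = 1 := by
  obtain ⟨z, hz0, hzk, hzP⟩ := exists_seq_mem_of_surjOn (S := {w : ℂ | w ^ k = 1})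
    (fun n w => w ^ P n) (fun n _ ha => exists_pow_eq_of_pow_eq_one_of_coprime ha (hco n)) hξ
  exact ⟨z, ⟨fun n => Complex.norm_eq_one_of_pow_eq_one (hzk n) hk.ne', hzP⟩, hz0, hzk⟩

theorem stmt_9_general (P : ℕ → ℕ) (k : ℕ) (hk : 0 < k)
    (hco : ∀ n, Nat.gcd k (P n) = 1) :
    (∀ ξ : ℂ, ξ ^ k = 1 → ∃ z ∈ Solenoid P, z 0 = ξ ∧ ∀ n, z n ^ k = 1) ∧
    (k : Cardinal) ≤ Cardinal.mk {z : ℕ → ℂ // z ∈ Solenoid P ∧ ∀ n, z n ^ k = 1} := by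
  have hext := fun ξ (hξ : ξ ^ k = 1) => exists_mem_solenoid_pow_eq_one hk hco hξ
  refine ⟨hext, ?_⟩
  have hsurj : Function.Surjective
      (fun z : {z : ℕ → ℂ // z ∈ Solenoid P ∧ ∀ n, z n ^ k = 1} =>
        (⟨z.1 0, z.2.2 0⟩ : {ξ : ℂ // ξ ^ k = 1})) := by
    rintro ⟨ξ, hξ⟩
    obtain ⟨z, hz, hz0, hzk⟩ := hext ξ hξ
    exact ⟨⟨z, hz, hzk⟩, Subtype.ext hz0⟩
  rw [← Complex.cardinalMk_pow_eq_one hk]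
  exact Cardinal.mk_le_of_surjective hsurj

/-- If `k` is coprime to every term of `P`, every `k`-th root of unity extends to a
point of the solenoid all of whose coordinates are `k`-th roots of unity; hence the
kernel of the coordinatewise `k`-th power map has at least `k` elements. -/
theorem stmt_9 (P : ℕ → ℕ) (hP : ∀ n, (P n).Prime) (k : ℕ) (hk : 0 < k)
    (hco : ∀ n, Nat.gcd k (P n) = 1) :
    (∀ ξ : ℂ, ξ ^ k = 1 → ∃ z ∈ Solenoid P, z 0 = ξ ∧ ∀ n, z n ^ k = 1) ∧
    (k : Cardinal) ≤ Cardinal.mk {z : ℕ → ℂ // z ∈ Solenoid P ∧ ∀ n, z n ^ k = 1} :=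
  stmt_9_general P k hk hco
end

section
/- For a prime p and a sequence of primes P : ℕ → ℕ, the additive group F_P of P-adic rationals (rationals of the form m/(P 0 · P 1 ⋯ P (n-1)) with m ∈ ℤ, n ∈ ℕ) is p-divisible if and only if p occurs infinitely often in P. -/
/-!
`F_P` is the increasing union of the cyclic groups `ℤ ⬝ (P 0 ⋯ P (n-1))⁻¹`. If `P k = p`, then
dividing by `p` takes the `k`-th of these groups into the `(k+1)`-st, so infinitely many
occurrences of `p` make `F_P` `p`-divisible. Conversely, if `p * g = (P 0 ⋯ P (M-1))⁻¹` with
`g = m / (P 0 ⋯ P (n-1))` and `M ≤ n`, then `p * m = P M ⋯ P (n-1)`, so `p = P i` for some `i ≥ M`.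
-/

def PadicRationals (P : ℕ → ℕ) : AddSubgroup ℚ :=
  AddSubgroup.closure {x : ℚ | ∃ n : ℕ, x = 1 / ∏ i ∈ Finset.range n, (P i : ℚ)}

namespace PadicRationals

open Finset AddSubgroup

variable {P : ℕ → ℕ}

def partialProd (P : ℕ → ℕ) (n : ℕ) : ℕ := ∏ i ∈ range n, P i

lemma natCast_mul_inv_partialProd_succ {n : ℕ} (hP : P n ≠ 0) :
    (P n : ℚ) * (partialProd P (n + 1) : ℚ)⁻¹ = (partialProd P n : ℚ)⁻¹ := by
  have : (P n : ℚ) ≠ 0 := Nat.cast_ne_zero.2 hP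
  rw [partialProd, prod_range_succ, ← partialProd, Nat.cast_mul, mul_inv, mul_left_comm,
    mul_inv_cancel₀ this, mul_one]

variable (P) in
theorem eq_iSup_zmultiples :
    PadicRationals P = ⨆ n, zmultiples ((partialProd P n : ℚ)⁻¹) := by
  have : {x : ℚ | ∃ n : ℕ, x = 1 / ∏ i ∈ range n, (P i : ℚ)} =
      ⋃ n, {((partialProd P n : ℚ))⁻¹} := by
    ext x
    simp [partialProd, eq_comm]
  rw [PadicRationals, this, AddSubgroup.closure_iUnion]
  simp only [zmultiples_eq_closure]

lemma zmultiples_inv_partialProd_mono (hP : ∀ n, P n ≠ 0) :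
    Monotone fun n => zmultiples ((partialProd P n : ℚ)⁻¹) := by
  refine monotone_nat_of_le_succ fun n => zmultiples_le_of_mem ?_
  rw [← natCast_mul_inv_partialProd_succ (hP n), ← nsmul_eq_mul]
  exact nsmul_mem (mem_zmultiples _) _

lemma zmultiples_le (n : ℕ) : zmultiples ((partialProd P n : ℚ)⁻¹) ≤ PadicRationals P :=
  eq_iSup_zmultiples P ▸ le_iSup (fun n => zmultiples ((partialProd P n : ℚ)⁻¹)) n

theorem mem_iff_exists_mem_zmultiples (hP : ∀ n, P n ≠ 0) {g : ℚ} :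
    g ∈ PadicRationals P ↔ ∃ n, g ∈ zmultiples ((partialProd P n : ℚ)⁻¹) := by
  rw [eq_iSup_zmultiples]
  exact mem_iSup_of_directed (zmultiples_inv_partialProd_mono hP).directed_le

theorem exists_natCast_mul_eq {p : ℕ} (hP : ∀ n, P n ≠ 0) (hfreq : ∀ M, ∃ k ≥ M, P k = p)
    {g : ℚ} (hg : g ∈ PadicRationals P) : ∃ g' ∈ PadicRationals P, (p : ℚ) * g' = g := by
  obtain ⟨n, hn⟩ := (mem_iff_exists_mem_zmultiples hP).1 hg
  obtain ⟨k, hkn, rfl⟩ := hfreq n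
  obtain ⟨m, rfl⟩ := mem_zmultiples_iff.1 (zmultiples_inv_partialProd_mono hP hkn hn)
  refine ⟨m • (partialProd P (k + 1) : ℚ)⁻¹, zsmul_mem (zmultiples_le _ (mem_zmultiples _)) m, ?_⟩
  rw [mul_smul_comm, natCast_mul_inv_partialProd_succ (hP k)]

theorem exists_ge_eq_of_natCast_mul_eq {p : ℕ} (hP : ∀ n, (P n).Prime) (hp : p.Prime)
    {g : ℚ} (hg : g ∈ PadicRationals P) {M : ℕ} (hpg : (p : ℚ) * g = (partialProd P M : ℚ)⁻¹) :
    ∃ i ≥ M, P i = p := by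
  have hP0 : ∀ n, P n ≠ 0 := fun n => (hP n).ne_zero
  obtain ⟨n₀, hn₀⟩ := (mem_iff_exists_mem_zmultiples hP0).1 hg
  set n := max n₀ M
  obtain ⟨m, rfl⟩ :=
    mem_zmultiples_iff.1 (zmultiples_inv_partialProd_mono hP0 (le_max_left n₀ M) hn₀)
  set R := ∏ i ∈ Ico M n, P i
  have hsplit : partialProd P M * R = partialProd P n :=
    prod_range_mul_prod_Ico _ (le_max_right _ _)
  have hpm : (p : ℤ) * m = R := by
    have hM : (partialProd P M : ℚ) ≠ 0 := Nat.cast_ne_zero.2 (prod_ne_zero_iff.2 fun i _ => hP0 i)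
    have hR : (R : ℚ) ≠ 0 := Nat.cast_ne_zero.2 (prod_ne_zero_iff.2 fun i _ => hP0 i)
    rw [← hsplit, zsmul_eq_mul, Nat.cast_mul] at hpg
    field_simp at hpg
    exact_mod_cast hpg
  have hpR : p ∣ R := Int.natCast_dvd_natCast.1 ⟨m, hpm.symm⟩
  obtain ⟨i, hi, hpi⟩ := (Nat.prime_iff.1 hp).dvd_finsetProd_iff _ |>.1 hpR
  exact ⟨i, (mem_Ico.1 hi).1, ((Nat.prime_dvd_prime_iff_eq hp (hP i)).1 hpi).symm⟩

end PadicRationals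

/-- `F_P` is `p`-divisible iff the prime `p` occurs infinitely often in `P`. -/
theorem stmt_10 (P : ℕ → ℕ) (hP : ∀ n, (P n).Prime) (p : ℕ) (hp : p.Prime) :
    (∀ g ∈ PadicRationals P, ∃ g' ∈ PadicRationals P, (p : ℚ) * g' = g) ↔
      {n | P n = p}.Infinite := by
  rw [← Nat.frequently_atTop_iff_infinite, Filter.frequently_atTop]
  constructor
  · intro hdiv M
    obtain ⟨g, hg, hpg⟩ :=
      hdiv _ (PadicRationals.zmultiples_le M (AddSubgroup.mem_zmultiples _))
    exact PadicRationals.exists_ge_eq_of_natCast_mul_eq hP hp hg hpg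
  · exact fun hfreq g => PadicRationals.exists_natCast_mul_eq (fun n => (hP n).ne_zero) hfreq
end

section
/- Let P : ℕ → ℕ be a sequence of primes in which every prime number occurs infinitely often. Let k ≥ 2 and z ∈ Σ_P. If (h_P^k)^m(z) = z for some positive integer m (i.e., z is periodic under the coordinatewise k-th power map), then z = e, the identity of Σ_P. -/
open Finset

theorem pow_prod_range_of_eq_pow_succ {M : Type*} [Monoid M] {P : ℕ → ℕ} {z : ℕ → M}
    (hz : ∀ n, z n = z (n + 1) ^ P n) (n j : ℕ) :
    z n = z (n + j) ^ ∏ i ∈ range j, P (n + i) := by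
  induction j with
  | zero => simp
  | succ j ih => rw [ih, hz (n + j), prod_range_succ, mul_comm, pow_mul, add_assoc]

theorem exists_dvd_prod_range_of_infinite {P : ℕ → ℕ}
    (hall : ∀ p : ℕ, p.Prime → {n | P n = p}.Infinite) (n : ℕ) {M : ℕ} (hM : M ≠ 0) :
    ∃ j, M ∣ ∏ i ∈ range j, P (n + i) := by
  induction M using induction_on_primes with
  | zero => exact absurd rfl hM
  | one => exact ⟨0, one_dvd _⟩
  | prime_mul p M hp ih =>
    obtain ⟨j, hj⟩ := ih (right_ne_zero_of_mul hM)
    obtain ⟨i, hip, hi⟩ := (hall p hp).exists_gt (n + j)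
    obtain ⟨t, rfl⟩ : ∃ t, i = n + (j + t) := ⟨i - (n + j), by omega⟩
    refine ⟨j + (t + 1), ?_⟩
    rw [prod_range_add, mul_comm p]
    refine mul_dvd_mul hj ?_
    rw [← show P (n + (j + t)) = p from hip]
    exact dvd_prod_of_mem _ (mem_range.2 (Nat.lt_succ_self t))

theorem hpow_iterate (k m : ℕ) (z : ℕ → ℂ) : (hpow k)^[m] z = fun n => z n ^ k ^ m := by
  induction m with
  | zero => simp
  | succ m ih =>
    rw [Function.iterate_succ_apply', ih]
    funext n
    simp only [hpow, ← pow_mul, pow_succ]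

theorem pow_eq_one_of_pow_succ_eq_self {M₀ : Type*} [MonoidWithZero M₀] [IsCancelMulZero M₀]
    {a : M₀} (ha : a ≠ 0) {d : ℕ} (h : a ^ (d + 1) = a) : a ^ d = 1 :=
  mul_right_cancel₀ ha (by rw [← pow_succ, h, one_mul])

theorem stmt_11_general (P : ℕ → ℕ)
    (hall : ∀ p : ℕ, p.Prime → {n | P n = p}.Infinite)
    (k : ℕ) (hk : 2 ≤ k) (z : ℕ → ℂ) (hz : z ∈ Solenoid P)
    (m : ℕ) (hm : 1 ≤ m) (hper : (hpow k)^[m] z = z) :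
    z = 1 := by
  obtain ⟨habs, hrel⟩ := hz
  have hkm : 2 ≤ k ^ m := hk.trans (Nat.le_self_pow (by omega) k)
  have hroot : ∀ n, z n ^ (k ^ m - 1) = 1 := by
    intro n
    refine pow_eq_one_of_pow_succ_eq_self (norm_ne_zero_iff.1 (by simp [habs n])) ?_
    rw [Nat.sub_add_cancel (by omega)]
    exact congrFun ((hpow_iterate k m z).symm.trans hper) n
  funext n
  obtain ⟨j, c, hc⟩ := exists_dvd_prod_range_of_infinite hall n (M := k ^ m - 1) (by omega)
  rw [pow_prod_range_of_eq_pow_succ hrel n j, hc, pow_mul, hroot, one_pow, Pi.one_apply]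

/-- If every prime occurs infinitely often in `P` and `k ≥ 2`, then the identity
is the only periodic point of the coordinatewise `k`-th power map. -/
theorem stmt_11 (P : ℕ → ℕ) (hP : ∀ n, (P n).Prime)
    (hall : ∀ p : ℕ, p.Prime → {n | P n = p}.Infinite)
    (k : ℕ) (hk : 2 ≤ k) (z : ℕ → ℂ) (hz : z ∈ Solenoid P)
    (m : ℕ) (hm : 1 ≤ m) (hper : (hpow k)^[m] z = z) :
    z = 1 :=
  stmt_11_general P hall k hk z hz m hm hper
end

section
/- Let P : ℕ → ℕ be a sequence of primes such that the set S(P) of primes not occurring infinitely often in P is infinite. Then for every positive integer k, the set of periodic points of the coordinatewise k-th power map h_P^k is dense in the solenoid Σ_P. -/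
open Finset Filter Real

lemma norm_pow_sub_pow_le {R : Type*} [SeminormedRing R] [NormOneClass R] {a b : R}
    (ha : ‖a‖ ≤ 1) (hb : ‖b‖ ≤ 1) (t : ℕ) : ‖a ^ t - b ^ t‖ ≤ t * ‖a - b‖ := by
  induction t with
  | zero => simp
  | succ t ih =>
    have hbt : ‖b ^ t‖ ≤ 1 := (norm_pow_le b t).trans (pow_le_one₀ (norm_nonneg b) hb)
    calc ‖a ^ (t + 1) - b ^ (t + 1)‖ = ‖a * (a ^ t - b ^ t) + (a - b) * b ^ t‖ := by
          rw [pow_succ', pow_succ']; congr 1; noncomm_ring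
      _ ≤ ‖a‖ * ‖a ^ t - b ^ t‖ + ‖a - b‖ * ‖b ^ t‖ :=
          (norm_add_le _ _).trans (add_le_add (norm_mul_le _ _) (norm_mul_le _ _))
      _ ≤ 1 * (t * ‖a - b‖) + ‖a - b‖ * 1 := by gcongr
      _ = (t + 1 : ℕ) * ‖a - b‖ := by push_cast; ring

lemma exists_seq_eq_mul_succ {M : Type*} [CommMonoid M] {c d : ℕ → M} {N : ℕ}
    (hcd : ∀ n, N ≤ n → d n * c n = 1) (a : M) :
    ∃ v : ℕ → M, v N = a ∧ ∀ n, v n = v (n + 1) * c n := by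
  refine ⟨fun n => a * (∏ j ∈ Ico n N, c j) * ∏ j ∈ Ico N n, d j, by simp, fun n => ?_⟩
  rcases lt_or_ge n N with hn | hn
  · simp only [Ico_eq_empty_of_le hn.le, Ico_eq_empty_of_le (Nat.succ_le_of_lt hn),
      prod_empty, prod_eq_prod_Ico_succ_bot hn c, mul_one]
    ac_rfl
  · simp only [Ico_eq_empty_of_le hn, Ico_eq_empty_of_le (Nat.le_succ_of_le hn),
      prod_empty, prod_Ico_succ_top hn d, mul_assoc, hcd n hn, mul_one]

namespace Solenoid

variable {P : ℕ → ℕ} {z w : ℕ → ℂ}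

lemma eq_pow_prod_Ico_s14 (hz : z ∈ Solenoid P) {n m : ℕ} (hnm : n ≤ m) :
    z n = z m ^ ∏ j ∈ Ico n m, P j := by
  induction m, hnm using Nat.le_induction with
  | base => simp
  | succ m hnm ih => rw [ih, hz.2 m, prod_Ico_succ_top hnm, ← pow_mul, mul_comm]

lemma norm_sub_le (hz : z ∈ Solenoid P) (hw : w ∈ Solenoid P) {n m : ℕ} (hnm : n ≤ m) :
    ‖w n - z n‖ ≤ (∏ j ∈ Ico n m, P j) * ‖w m - z m‖ := by
  rw [eq_pow_prod_Ico_s14 hw hnm, eq_pow_prod_Ico_s14 hz hnm]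
  exact_mod_cast norm_pow_sub_pow_le (hw.1 m).le (hz.1 m).le _

end Solenoid

lemma hpow_iterate_apply (k m : ℕ) (z : ℕ → ℂ) (n : ℕ) :
    (hpow k)^[m] z n = z n ^ k ^ m := by
  induction m generalizing z with
  | zero => simp
  | succ m ih => rw [Function.iterate_succ_apply, ih, hpow, ← pow_mul, pow_succ']

section toCircle

variable {r : ℕ} [NeZero r]

lemma toCircle_pow_pow_totient {k : ℕ} (hk : k.Coprime r) (b : ZMod r) :
    (ZMod.toCircle b : ℂ) ^ k ^ r.totient = ZMod.toCircle b := by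
  have hk1 : (k : ZMod r) ^ r.totient = 1 := by
    have h := congrArg Units.val (ZMod.pow_totient (ZMod.unitOfCoprime k hk))
    rwa [Units.val_pow_eq_pow_val, ZMod.coe_unitOfCoprime, Units.val_one] at h
  rw [← Circle.coe_pow, ← AddChar.map_nsmul_eq_pow, nsmul_eq_mul, Nat.cast_pow, hk1, one_mul]

lemma exists_norm_exp_sub_toCircle_le (θ : ℝ) :
    ∃ a : ZMod r, ‖Complex.exp (θ * Complex.I) - ZMod.toCircle a‖ ≤ 2 * π / r := by
  have hr : (r : ℝ) ≠ 0 := Nat.cast_ne_zero.mpr (NeZero.ne r)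
  set a : ℤ := ⌊θ * r / (2 * π)⌋
  have h_fract : θ - 2 * π * a / r = 2 * π / r * Int.fract (θ * r / (2 * π)) := by
    rw [Int.fract]; field_simp; ring
  refine ⟨a, ?_⟩
  have ha :
      (ZMod.toCircle (a : ZMod r) : ℂ) = Complex.exp ((2 * π * a / r : ℝ) * Complex.I) := by
    rw [ZMod.toCircle_intCast]; push_cast; ring_nf
  have hexp : Complex.exp (θ * Complex.I) = Complex.exp ((2 * π * a / r : ℝ) * Complex.I) *
      Complex.exp (Complex.I * (θ - 2 * π * a / r : ℝ)) := by
    rw [← Complex.exp_add]; push_cast; ring_nf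
  calc ‖Complex.exp (θ * Complex.I) - ZMod.toCircle (a : ZMod r)‖
      = ‖Complex.exp (Complex.I * (θ - 2 * π * a / r : ℝ)) - 1‖ := by
        rw [ha, hexp, ← mul_sub_one, norm_mul, Complex.norm_exp_ofReal_mul_I, one_mul]
    _ ≤ ‖θ - 2 * π * a / r‖ := Real.norm_exp_I_mul_ofReal_sub_one_le
    _ ≤ 2 * π / r := by
        rw [h_fract, norm_mul, Real.norm_of_nonneg (by positivity),
          Real.norm_of_nonneg (Int.fract_nonneg _)]
        exact mul_le_of_le_one_right (by positivity) (Int.fract_lt_one _).le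

lemma exists_toCircle_mem_solenoid {P : ℕ → ℕ} {N : ℕ} (hP : ∀ n, N ≤ n → (P n).Coprime r)
    (a : ZMod r) :
    ∃ v : ℕ → ZMod r, v N = a ∧ (fun n => (ZMod.toCircle (v n) : ℂ)) ∈ Solenoid P := by
  obtain ⟨v, hvN, hv⟩ := exists_seq_eq_mul_succ (c := fun n => (P n : ZMod r))
    (d := fun n => (P n : ZMod r)⁻¹)
    (fun n hn => ZMod.inv_mul_of_unit _ ((ZMod.isUnit_iff_coprime _ _).mpr (hP n hn))) a
  refine ⟨v, hvN, fun n => Circle.norm_coe _, fun n => ?_⟩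
  show (ZMod.toCircle (v n) : ℂ) = (ZMod.toCircle (v (n + 1)) : ℂ) ^ P n
  rw [hv n, mul_comm, ← nsmul_eq_mul, AddChar.map_nsmul_eq_pow, Circle.coe_pow]

end toCircle

lemma Solenoid.exists_periodic_norm_sub_lt {P : ℕ → ℕ} (hP : ∀ n, 0 < P n) {k q N : ℕ}
    (hq : 1 < q) (hkq : k.Coprime q) (hPq : ∀ n, N ≤ n → (P n).Coprime q) {z : ℕ → ℂ}
    (hz : z ∈ Solenoid P) {ε : ℝ} (hε : 0 < ε) :
    ∃ w ∈ Solenoid P, (∃ m, 1 ≤ m ∧ (hpow k)^[m] w = w) ∧ ∀ n ≤ N, ‖w n - z n‖ < ε := by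
  obtain ⟨e, he⟩ := pow_unbounded_of_one_lt (2 * π * (∏ j ∈ range N, P j) / ε)
    (Nat.one_lt_cast.mpr hq)
  set r := q ^ e
  have : NeZero r := ⟨pow_ne_zero e (by omega)⟩
  obtain ⟨a, ha⟩ := exists_norm_exp_sub_toCircle_le (r := r) (z N).arg
  obtain ⟨v, rfl, hw⟩ := exists_toCircle_mem_solenoid (fun n hn => (hPq n hn).pow_right e) a
  refine ⟨_, hw, ⟨r.totient, Nat.totient_pos.mpr (NeZero.pos r), funext fun n => ?_⟩,
    fun n hn => ?_⟩
  · rw [hpow_iterate_apply, toCircle_pow_pow_totient (hkq.pow_right e)]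
  · have hzN : z N = Complex.exp ((z N).arg * Complex.I) := by
      simpa [hz.1 N] using (Complex.norm_mul_exp_arg_mul_I (z N)).symm
    have hprod : ∏ j ∈ Ico n N, P j ≤ ∏ j ∈ range N, P j :=
      prod_le_prod_of_subset_of_one_le' (range_eq_Ico N ▸ Ico_subset_Ico_left (Nat.zero_le n))
        fun j _ _ => hP j
    calc _ ≤ (∏ j ∈ Ico n N, P j) * ‖(ZMod.toCircle (v N) : ℂ) - z N‖ :=
          Solenoid.norm_sub_le hz hw hn
      _ ≤ (∏ j ∈ range N, P j) * (2 * π / r) := by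
          refine mul_le_mul (by exact_mod_cast hprod) ?_ (norm_nonneg _) (by positivity)
          rw [norm_sub_rev, hzN]
          exact ha
      _ < ε := by
          rw [div_lt_iff₀ hε] at he
          rw [show (r : ℝ) = (q : ℝ) ^ e by push_cast [r]; rfl, mul_div_assoc',
            div_lt_iff₀ (by positivity)]
          linarith

lemma dense_of_forall_exists_dist_lt {E : Type*} [PseudoMetricSpace E] {S : Set (ℕ → E)}
    {A : Set S}
    (h : ∀ z : S, ∀ N : ℕ, ∀ ε > 0, ∃ w ∈ A, ∀ n ≤ N, dist ((w : ℕ → E) n) ((z : ℕ → E) n) < ε) :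
    Dense A := by
  intro z
  choose w hwA hw using fun j : ℕ => h z j (1 / (j + 1)) Nat.one_div_pos_of_nat
  refine mem_closure_of_tendsto (b := atTop) ?_ (Eventually.of_forall hwA)
  rw [tendsto_subtype_rng, tendsto_pi_nhds]
  intro n
  rw [tendsto_iff_dist_tendsto_zero]
  refine squeeze_zero' (Eventually.of_forall fun j => dist_nonneg) ?_
    tendsto_one_div_add_atTop_nhds_zero_nat
  filter_upwards [eventually_ge_atTop n] with j hj using (hw j n hj).le

/-- If infinitely many primes occur only finitely often in `P`, then for every
`k ≥ 1` the periodic points of the coordinatewise `k`-th power map are dense in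
the solenoid. -/
theorem stmt_14 (P : ℕ → ℕ) (hP : ∀ n, (P n).Prime)
    (hS : {q : ℕ | q.Prime ∧ {n | P n = q}.Finite}.Infinite)
    (k : ℕ) (hk : 0 < k) :
    Dense {z : Solenoid P | ∃ m : ℕ, 1 ≤ m ∧
      (hpow k)^[m] (z : ℕ → ℂ) = (z : ℕ → ℂ)} := by
  obtain ⟨q, ⟨hq, hq_fin⟩, hkq⟩ := hS.exists_gt k
  obtain ⟨M, hM⟩ := hq_fin.bddAbove
  have hk_cop : k.Coprime q :=
    Nat.coprime_comm.mp (hq.coprime_iff_not_dvd.mpr fun h => (Nat.le_of_dvd hk h).not_gt hkq)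
  refine dense_of_forall_exists_dist_lt fun z N ε hε => ?_
  have hPq : ∀ n, max N (M + 1) ≤ n → (P n).Coprime q := fun n hn =>
    (Nat.coprime_primes (hP n) hq).mpr fun h => by have := hM h; omega
  obtain ⟨w, hw, hper, hclose⟩ :=
    Solenoid.exists_periodic_norm_sub_lt (fun n => (hP n).pos) hq.one_lt hk_cop hPq z.2 hε
  exact ⟨⟨w, hw⟩, hper, fun n hn => by
    rw [dist_eq_norm]; exact hclose n (le_max_of_le_left hn)⟩
end
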